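/- arXiv:2108.06634 — 3 statements merged into one kernel-verified Lean document; each statement's English description precedes it below -/
import Mathlib

section
/- Let m be an even positive integer and let c_1 ≥ c_2 ≥ ... ≥ c_m ≥ 0 be real numbers with ∑_{i=1}^m c_i^2 = 1. Define K = 2·(c_1c_2 + c_3c_4 + ... + c_{m-1}c_m) = 2·∑_{j=1}^{m/2} c_{2j-1}c_{2j}, the Bell value B = 2·√(1 + K^2), and the concurrence C = 2·√(∑_{1 ≤ i < j ≤ m} c_i^2 c_j^2). Then B ≤ 2·√(1 + C^2). -/
/-! Writing `x_j = c_{2j-1}` and `y_j = c_{2j}`, `K ≤ C` amounts to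
`(∑ x_j y_j)² ≤ ∑_{i<j} c_i² c_j²`. Induct on the number of pairs: adding the pair `(p, q)`
adds `(p q)² + 2 p q ∑ x_j y_j` on the left, while the right gains `p² q²` plus
`(p² + q²) ∑_j (x_j² + y_j²)`, which dominates the cross terms since
`2 x y p q ≤ (x² + y²)(p² + q²)`. -/

open Finset

lemma sum_Icc_one_two_mul {M : Type*} [AddCommMonoid M] (h : ℕ → M) (n : ℕ) :
    ∑ i ∈ Icc 1 (2 * n), h i = ∑ j ∈ Icc 1 n, (h (2 * j - 1) + h (2 * j)) := by
  induction n with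
  | zero => simp
  | succ n ih =>
    rw [show 2 * (n + 1) = 2 * n + 1 + 1 by omega, sum_Icc_succ_top (by omega),
      sum_Icc_succ_top (by omega), ih, sum_Icc_succ_top (by omega),
      show 2 * (n + 1) - 1 = 2 * n + 1 by omega, show 2 * (n + 1) = 2 * n + 1 + 1 by omega,
      add_assoc]

lemma sum_Icc_sum_Icc_mul_succ {R : Type*} [CommSemiring R] (g : ℕ → R) (n : ℕ) :
    ∑ i ∈ Icc 1 (n + 1), ∑ j ∈ Icc (i + 1) (n + 1), g i * g j =
      ∑ i ∈ Icc 1 n, ∑ j ∈ Icc (i + 1) n, g i * g j + (∑ i ∈ Icc 1 n, g i) * g (n + 1) := by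
  rw [sum_Icc_succ_top (by omega), Icc_eq_empty_of_lt (Nat.lt_succ_self _), sum_empty, add_zero, sum_mul,
    ← sum_add_distrib]
  refine sum_congr rfl fun i hi => ?_
  rw [sum_Icc_succ_top (by simp only [mem_Icc] at hi; omega)]

lemma two_mul_mul_mul_le_sq_add_sq_mul (x y p q : ℝ) :
    2 * (x * y) * (p * q) ≤ (x ^ 2 + y ^ 2) * (p ^ 2 + q ^ 2) := by
  nlinarith [sq_nonneg (x * q - y * p), sq_nonneg (x * p - y * q), sq_nonneg (x * p + y * q),
    sq_nonneg (x * q + y * p)]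

lemma sq_sum_pair_mul_le_sum_Icc_sum_Icc (c : ℕ → ℝ) (n : ℕ) :
    (∑ j ∈ Icc 1 n, c (2 * j - 1) * c (2 * j)) ^ 2 ≤
      ∑ i ∈ Icc 1 (2 * n), ∑ j ∈ Icc (i + 1) (2 * n), c i ^ 2 * c j ^ 2 := by
  induction n with
  | zero => simp
  | succ n ih =>
    set A := ∑ j ∈ Icc 1 n, c (2 * j - 1) * c (2 * j)
    set p := c (2 * n + 1)
    set q := c (2 * n + 2)
    have hL : ∑ j ∈ Icc 1 (n + 1), c (2 * j - 1) * c (2 * j) = A + p * q := by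
      rw [sum_Icc_succ_top (by omega), show 2 * (n + 1) - 1 = 2 * n + 1 by omega,
        show 2 * (n + 1) = 2 * n + 2 by omega]
    have hR : ∑ i ∈ Icc 1 (2 * (n + 1)), ∑ j ∈ Icc (i + 1) (2 * (n + 1)), c i ^ 2 * c j ^ 2 =
        ∑ i ∈ Icc 1 (2 * n), ∑ j ∈ Icc (i + 1) (2 * n), c i ^ 2 * c j ^ 2 +
          (∑ i ∈ Icc 1 (2 * n), c i ^ 2) * (p ^ 2 + q ^ 2) + p ^ 2 * q ^ 2 := by
      rw [show 2 * (n + 1) = 2 * n + 1 + 1 by omega, sum_Icc_sum_Icc_mul_succ (c · ^ 2),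
        sum_Icc_sum_Icc_mul_succ (c · ^ 2), sum_Icc_succ_top (by omega)]
      ring
    have hcross : 2 * A * (p * q) ≤ (∑ i ∈ Icc 1 (2 * n), c i ^ 2) * (p ^ 2 + q ^ 2) := by
      rw [sum_Icc_one_two_mul, mul_sum, sum_mul, sum_mul]
      exact sum_le_sum fun j _ => two_mul_mul_mul_le_sq_add_sq_mul _ _ _ _
    rw [hL, hR]
    nlinarith

theorem bell_upper_bound_even_general (m : ℕ) (hm : Even m)
    (c : ℕ → ℝ)
    (K B C : ℝ)
    (hK : K = 2 * ∑ j ∈ Finset.Icc 1 (m / 2), c (2 * j - 1) * c (2 * j))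
    (hB : B = 2 * Real.sqrt (1 + K ^ 2))
    (hC : C = 2 * Real.sqrt (∑ i ∈ Finset.Icc 1 m,
      ∑ j ∈ Finset.Icc (i + 1) m, (c i) ^ 2 * (c j) ^ 2)) :
    B ≤ 2 * Real.sqrt (1 + C ^ 2) := by
  obtain ⟨n, rfl⟩ := even_iff_two_dvd.mp hm
  rw [Nat.mul_div_cancel_left n two_pos] at hK
  have hS : 0 ≤ ∑ i ∈ Icc 1 (2 * n), ∑ j ∈ Icc (i + 1) (2 * n), c i ^ 2 * c j ^ 2 :=
    sum_nonneg fun _ _ => sum_nonneg fun _ _ => by positivity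
  have hKC : K ^ 2 ≤ C ^ 2 := by
    rw [hK, hC, mul_pow, mul_pow, Real.sq_sqrt hS]
    exact mul_le_mul_of_nonneg_left (sq_sum_pair_mul_le_sum_Icc_sum_Icc c n) (by norm_num)
  rw [hB]
  gcongr

/-- **Theorem 1 (upper bound).** For an even positive integer `m` and nonincreasing
nonnegative Schmidt coefficients `c 1 ≥ c 2 ≥ ⋯ ≥ c m ≥ 0` with `∑ cᵢ² = 1`,
setting `K = 2 ∑_{j=1}^{m/2} c_{2j-1} c_{2j}`, the Bell value `B = 2√(1 + K²)`
and the concurrence `C = 2√(∑_{i<j} cᵢ² cⱼ²)` satisfy `B ≤ 2√(1 + C²)`. -/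
theorem bell_upper_bound_even (m : ℕ) (hm : Even m) (hm0 : 0 < m)
    (c : ℕ → ℝ)
    (hnonneg : ∀ i, 1 ≤ i → i ≤ m → 0 ≤ c i)
    (hmono : ∀ i, 1 ≤ i → i < m → c (i + 1) ≤ c i)
    (hnorm : ∑ i ∈ Finset.Icc 1 m, (c i) ^ 2 = 1)
    (K B C : ℝ)
    (hK : K = 2 * ∑ j ∈ Finset.Icc 1 (m / 2), c (2 * j - 1) * c (2 * j))
    (hB : B = 2 * Real.sqrt (1 + K ^ 2))
    (hC : C = 2 * Real.sqrt (∑ i ∈ Finset.Icc 1 m,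
      ∑ j ∈ Finset.Icc (i + 1) m, (c i) ^ 2 * (c j) ^ 2)) :
    B ≤ 2 * Real.sqrt (1 + C ^ 2) :=
  bell_upper_bound_even_general m hm c K B C hK hB hC
end

section
/- Let m be an even positive integer and let c_1 ≥ c_2 ≥ ... ≥ c_m ≥ 0 be real numbers with ∑_{i=1}^m c_i^2 = 1. Define K = 2·∑_{j=1}^{m/2} c_{2j-1}c_{2j}, the Bell value B = 2·√(1 + K^2), and the concurrence C = 2·√(∑_{1 ≤ i < j ≤ m} c_i^2 c_j^2). Then B ≥ √(2·(1 + C^2)). -/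
/-!
Write `pᵢ = cᵢ²`, `Q = ∑ pᵢ²` and `S = ∑_{i<j} pᵢ pⱼ`, so that `1 = (∑ pᵢ)² = Q + 2S`,
`C² = 4S = 2(1 - Q)` and `B² = 4(1 + K²)`; the claim becomes `K² + Q ≥ 1/2`.
Monotonicity gives `2 c₂ⱼ₋₁ c₂ⱼ ≥ 2 c₂ⱼ² ≥ c₂ⱼ² + c₂ⱼ₊₁²`, hence `K ≥ ∑_{i ≥ 2} pᵢ = 1 - p₁`,
while `Q ≥ p₁²`. So `K² + Q ≥ (1 - p₁)² + p₁² ≥ 1/2`.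
-/

open Finset

theorem sq_sum_Icc_eq_sum_sq_add_two_mul_sum_lt (x : ℕ → ℝ) (M : ℕ) :
    (∑ i ∈ Icc 1 M, x i) ^ 2
      = ∑ i ∈ Icc 1 M, x i ^ 2 + 2 * ∑ i ∈ Icc 1 M, ∑ j ∈ Icc (i + 1) M, x i * x j := by
  induction M with
  | zero => simp
  | succ M ih =>
    have hinner : ∀ i ∈ Icc 1 M, ∑ j ∈ Icc (i + 1) (M + 1), x i * x j
        = ∑ j ∈ Icc (i + 1) M, x i * x j + x i * x (M + 1) := fun i hi =>
      sum_Icc_succ_top (by simp only [mem_Icc] at hi; omega) _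
    rw [sum_Icc_succ_top (by omega : 1 ≤ M + 1), sum_Icc_succ_top (by omega : 1 ≤ M + 1),
      sum_Icc_succ_top (by omega : 1 ≤ M + 1), sum_congr rfl hinner, sum_add_distrib, ← sum_mul,
      Icc_eq_empty (by omega : ¬M + 1 + 1 ≤ M + 1), sum_empty]
    linear_combination ih

/-- The extra `c (2 * n) ^ 2` on the left is what makes the induction go through. -/
theorem sum_sq_add_sq_le_sq_add_two_mul_sum_pairs (c : ℕ → ℝ) {n : ℕ} (hn : 1 ≤ n)
    (hnonneg : ∀ i, 1 ≤ i → i ≤ 2 * n → 0 ≤ c i)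
    (hmono : ∀ i, 1 ≤ i → i < 2 * n → c (i + 1) ≤ c i) :
    ∑ i ∈ Icc 1 (2 * n), c i ^ 2 + c (2 * n) ^ 2
      ≤ c 1 ^ 2 + 2 * ∑ j ∈ Icc 1 n, c (2 * j - 1) * c (2 * j) := by
  induction n, hn using Nat.le_induction with
  | base =>
    have hc21 := hmono 1 le_rfl (by omega)
    have hc2 := hnonneg 2 (by omega) le_rfl
    simp only [Nat.reduceMul, Icc_self, sum_singleton, Nat.reduceSub,
      sum_Icc_succ_top (show 1 ≤ 2 by omega)]
    nlinarith
  | succ n hn ih =>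
    have hprev := ih (fun i hi _ => hnonneg i hi (by omega)) (fun i hi _ => hmono i hi (by omega))
    have hmono₁ := hmono (2 * n) (by omega) (by omega)
    have hmono₂ := hmono (2 * n + 1) (by omega) (by omega)
    have hpos1 := hnonneg (2 * n + 1) (by omega) (by omega)
    have hpos2 := hnonneg (2 * n + 2) (by omega) (by omega)
    rw [show 2 * (n + 1) = 2 * n + 1 + 1 by ring, sum_Icc_succ_top (by omega),
      sum_Icc_succ_top (by omega), sum_Icc_succ_top (by omega),
      show 2 * (n + 1) - 1 = 2 * n + 1 by omega, show 2 * (n + 1) = 2 * n + 2 by ring]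
    nlinarith

/-- **Theorem 2 (lower bound).** For an even positive integer `m` and nonincreasing
nonnegative Schmidt coefficients `c 1 ≥ ⋯ ≥ c m ≥ 0` with `∑ cᵢ² = 1`, setting
`K = 2 ∑_{j=1}^{m/2} c_{2j-1} c_{2j}`, the Bell value `B = 2√(1 + K²)` and the
concurrence `C = 2√(∑_{i<j} cᵢ² cⱼ²)` satisfy `B ≥ √(2(1 + C²))`. -/
theorem bell_lower_bound_even (m : ℕ) (hm : Even m) (hm0 : 0 < m)
    (c : ℕ → ℝ)
    (hnonneg : ∀ i, 1 ≤ i → i ≤ m → 0 ≤ c i)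
    (hmono : ∀ i, 1 ≤ i → i < m → c (i + 1) ≤ c i)
    (hnorm : ∑ i ∈ Finset.Icc 1 m, (c i) ^ 2 = 1)
    (K B C : ℝ)
    (hK : K = 2 * ∑ j ∈ Finset.Icc 1 (m / 2), c (2 * j - 1) * c (2 * j))
    (hB : B = 2 * Real.sqrt (1 + K ^ 2))
    (hC : C = 2 * Real.sqrt (∑ i ∈ Finset.Icc 1 m,
      ∑ j ∈ Finset.Icc (i + 1) m, (c i) ^ 2 * (c j) ^ 2)) :
    B ≥ Real.sqrt (2 * (1 + C ^ 2)) := by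
  obtain ⟨n, rfl⟩ := hm.two_dvd
  rw [Nat.mul_div_cancel_left n two_pos] at hK
  set Q := ∑ i ∈ Icc 1 (2 * n), (c i ^ 2) ^ 2
  set S := ∑ i ∈ Icc 1 (2 * n), ∑ j ∈ Icc (i + 1) (2 * n), c i ^ 2 * c j ^ 2
  have hone_mem : 1 ∈ Icc 1 (2 * n) := mem_Icc.2 ⟨le_rfl, hm0⟩
  have hK_ge : 1 - c 1 ^ 2 ≤ K := by
    have := sum_sq_add_sq_le_sq_add_two_mul_sum_pairs c (by omega) hnonneg hmono
    nlinarith [sq_nonneg (c (2 * n))]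
  have hc1 : c 1 ^ 2 ≤ 1 := hnorm ▸ single_le_sum (fun i _ => sq_nonneg (c i)) hone_mem
  have hQ : (c 1 ^ 2) ^ 2 ≤ Q := single_le_sum (fun i _ => sq_nonneg (c i ^ 2)) hone_mem
  have hQS : 1 = Q + 2 * S := by
    have := sq_sum_Icc_eq_sum_sq_add_two_mul_sum_lt (fun i => c i ^ 2) (2 * n)
    beta_reduce at this
    rwa [hnorm, one_pow] at this
  have hS : 0 ≤ S := sum_nonneg fun i _ => sum_nonneg fun j _ => by positivity
  have hB2 : B ^ 2 = 4 * (1 + K ^ 2) := by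
    rw [hB, mul_pow, Real.sq_sqrt (by positivity)]; norm_num
  have hC2 : C ^ 2 = 4 * S := by
    rw [hC, mul_pow, Real.sq_sqrt hS]; norm_num
  rw [ge_iff_le, Real.sqrt_le_iff]
  refine ⟨by rw [hB]; positivity, ?_⟩
  rw [hB2, hC2]
  nlinarith [mul_self_le_mul_self (by linarith) hK_ge, sq_nonneg (1 - 2 * c 1 ^ 2)]
end

section
/- Let m be an even positive integer and let c_1 ≥ c_2 ≥ ... ≥ c_m ≥ 0 be real numbers with ∑_{i=1}^m c_i^2 = 1. Then 1 + 8·(∑_{j=1}^{m/2} c_{2j-1}c_{2j})^2 ≥ 2·∑_{i ≠ j} c_i^2 c_j^2, where the right-hand sum is over all ordered pairs (i, j) with 1 ≤ i, j ≤ m and i ≠ j. -/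
/-!
Write `a = c₁²`. Since `c` is nonincreasing and nonnegative, pairing the coefficients gives
`2K ≥ ∑_{i ≥ 2} cᵢ² = 1 - a`, while `∑ cᵢ⁴ ≥ a²`. Hence
`C² = 2 (1 - ∑ cᵢ⁴) ≤ 2 (1 - a²) ≤ 1 + 2 (1 - a)² ≤ 1 + 2 (2K)²`,
the middle step being `(1 - 2a)² ≥ 0`.
-/

open Finset

theorem Finset.sum_offDiag_mul_eq_sq_sum_sub {α R : Type*} [DecidableEq α] [CommRing R]
    (s : Finset α) (f : α → R) :
    ∑ p ∈ s.offDiag, f p.1 * f p.2 = (∑ i ∈ s, f i) ^ 2 - ∑ i ∈ s, f i ^ 2 := by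
  rw [sq, sum_mul_sum, ← sum_product', ← diag_union_offDiag,
    sum_union (disjoint_diag_offDiag s), sum_diag]
  simp only [sq, add_sub_cancel_left]

/-- The extra `c (2n)²` on the left makes the bound inductive: the step from `n` to `n + 1` uses
`c (2n+1)² ≤ c (2n)²` and `c (2n+2)² ≤ c (2n+1) c (2n+2)`. -/
theorem sum_sq_add_sq_le_sq_add_two_mul_sum_pair_mul (m : ℕ) (c : ℕ → ℝ)
    (hnonneg : ∀ i, 1 ≤ i → i ≤ m → 0 ≤ c i)
    (hmono : ∀ i, 1 ≤ i → i < m → c (i + 1) ≤ c i) (n : ℕ) (hn : 1 ≤ n) (hnm : 2 * n ≤ m) :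
    ∑ i ∈ Icc 1 (2 * n), c i ^ 2 + c (2 * n) ^ 2 ≤
      c 1 ^ 2 + 2 * ∑ j ∈ Icc 1 n, c (2 * j - 1) * c (2 * j) := by
  induction n, hn using Nat.le_induction with
  | base =>
    have hle := hmono 1 le_rfl (by omega)
    have hnonneg₂ := hnonneg 2 (by omega) hnm
    norm_num [sum_Icc_succ_top]
    nlinarith
  | succ n hn ih =>
    have hle₁ := hmono (2 * n) (by omega) (by omega)
    have hle₂ := hmono (2 * n + 1) (by omega) (by omega)
    have hnonneg₂ := hnonneg (2 * n + 2) (by omega) (by omega)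
    rw [sum_Icc_succ_top (by omega), show 2 * (n + 1) - 1 = 2 * n + 1 by omega,
      show 2 * (n + 1) = 2 * n + 1 + 1 by ring, sum_Icc_succ_top (by omega),
      sum_Icc_succ_top (by omega)]
    nlinarith [ih (by omega)]

theorem two_mul_one_sub_le_one_add_eight_mul_sq {a S K : ℝ} (hS : a ^ 2 ≤ S) (ha : a ≤ 1)
    (hK : 1 - a ≤ 2 * K) : 2 * (1 - S) ≤ 1 + 8 * K ^ 2 := by
  nlinarith [sq_nonneg (1 - 2 * a), pow_le_pow_left₀ (sub_nonneg.2 ha) hK 2]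

/-- **Key inequality `1 + 2K² ≥ C²`.** For an even positive integer `m` and nonincreasing
nonnegative reals `c 1 ≥ ⋯ ≥ c m ≥ 0` with `∑ cᵢ² = 1`:
`1 + 8 (∑_{j=1}^{m/2} c_{2j-1} c_{2j})² ≥ 2 ∑_{i ≠ j} cᵢ² cⱼ²`, the right-hand sum
running over ordered pairs `(i, j)` with `1 ≤ i, j ≤ m` and `i ≠ j`. -/
theorem one_add_two_K_sq_ge_C_sq (m : ℕ) (hm : Even m) (hm0 : 0 < m)
    (c : ℕ → ℝ)
    (hnonneg : ∀ i, 1 ≤ i → i ≤ m → 0 ≤ c i)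
    (hmono : ∀ i, 1 ≤ i → i < m → c (i + 1) ≤ c i)
    (hnorm : ∑ i ∈ Finset.Icc 1 m, (c i) ^ 2 = 1) :
    1 + 8 * (∑ j ∈ Finset.Icc 1 (m / 2), c (2 * j - 1) * c (2 * j)) ^ 2 ≥
      2 * ∑ p ∈ (Finset.Icc 1 m).offDiag, (c p.1) ^ 2 * (c p.2) ^ 2 := by
  obtain ⟨n, rfl⟩ := hm
  have h1 : 1 ∈ Icc 1 (n + n) := mem_Icc.2 ⟨le_rfl, hm0⟩
  have hpairs := sum_sq_add_sq_le_sq_add_two_mul_sum_pair_mul (n + n) c hnonneg hmono n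
    (by omega) (by omega)
  rw [two_mul, hnorm] at hpairs
  have hc1 : c 1 ^ 2 ≤ 1 :=
    hnorm ▸ single_le_sum (fun i _ => sq_nonneg (c i)) h1
  have hc1_fourth : (c 1 ^ 2) ^ 2 ≤ ∑ i ∈ Icc 1 (n + n), (c i ^ 2) ^ 2 :=
    single_le_sum (fun i _ => sq_nonneg (c i ^ 2)) h1
  rw [sum_offDiag_mul_eq_sq_sum_sub _ fun i => c i ^ 2, hnorm, one_pow,
    show (n + n) / 2 = n by omega]
  exact two_mul_one_sub_le_one_add_eight_mul_sq hc1_fourth hc1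
    (by linarith [sq_nonneg (c (n + n))])
end
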